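/- Let a, b₁, b₂, b₃: ℤ → ℝ be finitely supported real-valued 1D filters such that {a; b₁, b₂, b₃} is a tight 2-framelet filter bank with b̂₁(ω) = e^{−iω}·conj(â(ω+π)) and b̂₃(ω) = e^{−iω}·conj(b̂₂(ω+π)), and let u₁, u₂: ℤ → ℝ be finitely supported with |â(ω)|² + |û₁(ω)|² + |û₂(ω)|² = 1 for all ω ∈ ℝ. With b₀ := a and u₀ := a, define 2D filters b^{2D}_{j,k} for j ∈ {0,1,2,3}, k ∈ {0,1,2} by b̂^{2D}_{2j,k}(ω₁,ω₂) = b̂_{2j}(ω₁)·û_k(ω₂) and b̂^{2D}_{2j+1,k}(ω₁,ω₂) = b̂_{2j+1}(ω₁)·conj(û_k(ω₂+π)) (j ∈ {0,1}), and set a^{2D} := b^{2D}_{0,0}, so that â^{2D}(ω₁,ω₂) = â(ω₁)â(ω₂). Then a^{2D} together with the eleven high-pass filters b^{2D}_{1,0}, b^{2D}_{2,0}, b^{2D}_{3,0}, b^{2D}_{0,1}, b^{2D}_{1,1}, b^{2D}_{2,1}, b^{2D}_{3,1}, b^{2D}_{0,2}, b^{2D}_{1,2}, b^{2D}_{2,2},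 b^{2D}_{3,2} forms a quincunx tight framelet filter bank satisfying b̂^{2D}_{2j+1,k}(ω) = e^{−iω₁}·conj(b̂^{2D}_{2j,k}(ω+(π,π))) for j ∈ {0,1}, k ∈ {0,1,2} (a 6-multiple canonical quincunx tight framelet filter bank). Moreover, if â(0) = 1 and a has order m sum rules with respect to 2, then a^{2D} has at least order 2m sum rules with respect to M_{√2}; and if a(c−k) = a(k) for all k ∈ ℤ for some c ∈ ℤ, then a^{2D} is D₄-symmetric about the point (c/2, c/2). -/

import Mathlib

open Complex Real

/-- Fourier series of a finitely supported 1D filter. -/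
noncomputable def fhat1 (u : ℤ → ℂ) (ω : ℝ) : ℂ :=
  ∑ᶠ k : ℤ, u k * Complex.exp (-(Complex.I) * (k : ℂ) * (ω : ℂ))

/-- Fourier series of a finitely supported 2D filter. -/
noncomputable def fhat2 (a : ℤ × ℤ → ℂ) (ω : ℝ × ℝ) : ℂ :=
  ∑ᶠ k : ℤ × ℤ, a k * Complex.exp (-(Complex.I) * ((k.1 : ℂ) * (ω.1 : ℂ) + (k.2 : ℂ) * (ω.2 : ℂ)))

/-- Order `m` sum rules with respect to `2` for a 1D filter. -/
def SumRules1D (a : ℤ → ℂ) (m : ℕ) : Prop :=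
  fhat1 a 0 = 1 ∧ ∀ j : ℕ, j < m → ∑ᶠ k : ℤ, ((-1 : ℂ) ^ k * a k * (k : ℂ) ^ j) = 0

/-- Order `m` sum rules with respect to the quincunx matrix `M_{√2}` for a 2D filter. -/
def SumRules2D (a : ℤ × ℤ → ℂ) (m : ℕ) : Prop :=
  fhat2 a (0, 0) = 1 ∧ ∀ μ : ℕ × ℕ, μ.1 + μ.2 < m →
    ∑ᶠ k : ℤ × ℤ, ((-1 : ℂ) ^ (k.1 + k.2) * a k * (k.1 : ℂ) ^ μ.1 * (k.2 : ℂ) ^ μ.2) = 0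

/-- The dihedral group `D₄` of eight 2×2 integer matrices (viewed over ℝ). -/
def D4 : Set (Matrix (Fin 2) (Fin 2) ℝ) :=
  {!![1, 0; 0, 1], !![-1, 0; 0, -1], !![1, 0; 0, -1], !![-1, 0; 0, 1],
   !![0, 1; 1, 0], !![0, -1; -1, 0], !![0, 1; -1, 0], !![0, -1; 1, 0]}

/-- `a` is `D₄`-symmetric about the point `c`: `a(E(k−c)+c) = a(k)` for all `k ∈ ℤ²`, `E ∈ D₄`. -/
def D4Symm (a : ℤ × ℤ → ℂ) (c : ℝ × ℝ) : Prop :=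
  ∀ E ∈ D4, ∀ k k' : ℤ × ℤ,
    (![(k'.1 : ℝ), (k'.2 : ℝ)]
      = E.mulVec ![(k.1 : ℝ) - c.1, (k.2 : ℝ) - c.2] + ![c.1, c.2]) →
    a k' = a k

/-! Everything is read off the symbols. Every 2D symbol is a product of a 1D symbol in `ω₁`
and a factor in `ω₂`, which is `û_k(ω₂)` in even rows and `conj û_k(ω₂ + π)` in odd rows. Summing
over `k` first, `|â|² + |û₁|² + |û₂|² = 1` (at `ω₂` and at `ω₂ + π`) reduces the first tightness
identity to the 1D one, and the second one factors through the 1D one by `2π`-periodicity.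
Characters are linearly independent, so a finitely supported filter is determined by its symbol and
`a^{2D}` is the tensor filter `a ⊗ a`: its alternating moments factor into 1D moments, which gives
order `2m` sum rules, and each element of `D₄` permutes the coordinates and reflects them about
`c/2`, which leaves `a ⊗ a` invariant. -/

open Finset Function

theorem finsum_mul_finsum_prod {α β R : Type*} [NonUnitalNonAssocSemiring R] [NoZeroDivisors R]
    {f : α → R} {g : β → R} (hf : (support f).Finite) (hg : (support g).Finite) :
    (∑ᶠ a, f a) * ∑ᶠ b, g b = ∑ᶠ p : α × β, f p.1 * g p.2 := by
  have hfg : (support fun p : α × β => f p.1 * g p.2).Finite :=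
    (hf.prod hg).subset fun p hp => ⟨left_ne_zero_of_mul hp, right_ne_zero_of_mul hp⟩
  rw [finsum_curry _ hfg, finsum_mul]
  simp only [mul_finsum]

theorem fhat1_periodic (u : ℤ → ℂ) : Periodic (fhat1 u) (2 * π) := fun ω => by
  refine finsum_congr fun k => congrArg (u k * ·) ?_
  rw [show -I * k * ((ω + 2 * π : ℝ) : ℂ) = -I * k * ω + (-k : ℤ) * (2 * π * I) by
    push_cast; ring, Complex.exp_add, exp_int_mul_two_pi_mul_I, mul_one]

def tensorFilter (u v : ℤ → ℂ) (k : ℤ × ℤ) : ℂ := u k.1 * v k.2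

theorem support_tensorFilter_finite {u v : ℤ → ℂ} (hu : (support u).Finite)
    (hv : (support v).Finite) : (support (tensorFilter u v)).Finite :=
  (hu.prod hv).subset fun _ hk => ⟨left_ne_zero_of_mul hk, right_ne_zero_of_mul hk⟩

theorem fhat2_tensorFilter {u v : ℤ → ℂ} (hu : (support u).Finite) (hv : (support v).Finite)
    (ω : ℝ × ℝ) : fhat2 (tensorFilter u v) ω = fhat1 u ω.1 * fhat1 v ω.2 := by
  have fin (w : ℤ → ℂ) (hw : (support w).Finite) (t : ℝ) :
      (support fun k : ℤ => w k * exp (-I * k * t)).Finite :=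
    hw.subset fun _ hk => left_ne_zero_of_mul hk
  rw [fhat1, fhat1, finsum_mul_finsum_prod (fin u hu _) (fin v hv _), fhat2]
  refine finsum_congr fun k => ?_
  rw [tensorFilter, mul_add, Complex.exp_add]
  ring_nf

noncomputable def fourierChar₂ (k : ℤ × ℤ) : Multiplicative (ℝ × ℝ) →* ℂ where
  toFun ω := exp (-I * (k.1 * (ω.toAdd.1 : ℂ) + k.2 * (ω.toAdd.2 : ℂ)))
  map_one' := by simp
  map_mul' x y := by
    rw [← Complex.exp_add]
    push_cast [toAdd_mul, Prod.fst_add, Prod.snd_add]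
    ring_nf

theorem int_eq_of_forall_exp_eq {m n : ℤ}
    (h : ∀ t : ℝ, exp (-I * (m * t)) = exp (-I * (n * t))) : m = n := by
  by_contra hmn
  have hmn' : ((m - n : ℤ) : ℂ) ≠ 0 := by exact_mod_cast sub_ne_zero.2 hmn
  have key := h (π / (m - n))
  rw [← div_eq_one_iff_eq (Complex.exp_ne_zero _), ← Complex.exp_sub] at key
  rw [show -I * (m * ((π / (m - n) : ℝ) : ℂ)) - -I * (n * ((π / (m - n) : ℝ) : ℂ))
      = -(π * I) by push_cast at hmn' ⊢; field_simp; ring,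
    Complex.exp_neg, exp_pi_mul_I] at key
  norm_num at key

theorem fourierChar₂_injective : Injective fourierChar₂ := by
  intro k l h
  have hω (ω : ℝ × ℝ) := DFunLike.congr_fun h (Multiplicative.ofAdd ω)
  simp only [fourierChar₂, MonoidHom.coe_mk, OneHom.coe_mk, toAdd_ofAdd] at hω
  refine Prod.ext (int_eq_of_forall_exp_eq fun t => ?_) (int_eq_of_forall_exp_eq fun t => ?_)
  · simpa using hω (t, 0)
  · simpa using hω (0, t)

theorem eq_of_fhat2_eq {f g : ℤ × ℤ → ℂ} (hf : (support f).Finite) (hg : (support g).Finite)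
    (h : ∀ ω, fhat2 f ω = fhat2 g ω) : f = g := by
  have hli : LinearIndependent ℂ fun k => ⇑(fourierChar₂ k) :=
    (linearIndependent_monoidHom _ ℂ).comp _ fourierChar₂_injective
  have hcomb (F : ℤ × ℤ →₀ ℂ) (ω : Multiplicative (ℝ × ℝ)) :
      Finsupp.linearCombination ℂ (fun k => ⇑(fourierChar₂ k)) F ω = fhat2 F ω.toAdd := by
    rw [Finsupp.linearCombination_apply, Finsupp.sum, Finset.sum_apply, fhat2,
      finsum_eq_sum_of_support_subset _ fun k hk =>
        F.mem_support_iff.2 (left_ne_zero_of_mul hk)]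
    rfl
  have := hli (a₁ := Finsupp.ofSupportFinite f hf) (a₂ := Finsupp.ofSupportFinite g hg) <| by
    ext ω; simpa only [hcomb, Finsupp.ofSupportFinite_coe] using h ω.toAdd
  exact congrArg (⇑) this

theorem Finset.sum_range_two_mul {M : Type*} [AddCommMonoid M] (f : ℕ → M) (n : ℕ) :
    ∑ i ∈ range (2 * n), f i = ∑ i ∈ range n, (f (2 * i) + f (2 * i + 1)) := by
  induction n with
  | zero => simp
  | succ n ih => rw [Nat.mul_succ, sum_range_succ, sum_range_succ, ih, sum_range_succ, add_assoc]

open ComplexConjugate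

structure IsTensorBank (J K : ℕ) (bs us : ℕ → ℤ → ℂ) (B : ℕ → ℕ → ℤ × ℤ → ℂ) : Prop where
  even : ∀ j < J, ∀ k < K, ∀ ω : ℝ × ℝ,
    fhat2 (B (2 * j) k) ω = fhat1 (bs (2 * j)) ω.1 * fhat1 (us k) ω.2
  odd : ∀ j < J, ∀ k < K, ∀ ω : ℝ × ℝ,
    fhat2 (B (2 * j + 1) k) ω = fhat1 (bs (2 * j + 1)) ω.1 * conj (fhat1 (us k) (ω.2 + π))

namespace IsTensorBank

variable {J K : ℕ} {bs us : ℕ → ℤ → ℂ} {B : ℕ → ℕ → ℤ × ℤ → ℂ}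

theorem sum_normSq_eq_one (hB : IsTensorBank J K bs us B)
    (hbs : ∀ ω, ∑ j ∈ range (2 * J), normSq (fhat1 (bs j) ω) = 1)
    (hus : ∀ ω, ∑ k ∈ range K, normSq (fhat1 (us k) ω) = 1) (ω : ℝ × ℝ) :
    ∑ j ∈ range (2 * J), ∑ k ∈ range K, normSq (fhat2 (B j k) ω) = 1 := by
  rw [sum_range_two_mul, ← hbs ω.1, sum_range_two_mul]
  refine sum_congr rfl fun j hj => ?_
  replace hj := mem_range.1 hj
  have heven : ∑ k ∈ range K, normSq (fhat2 (B (2 * j) k) ω)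
      = normSq (fhat1 (bs (2 * j)) ω.1) := by
    rw [← mul_one (normSq _), ← hus ω.2, mul_sum]
    exact sum_congr rfl fun k hk => by rw [hB.even j hj k (mem_range.1 hk), normSq_mul]
  have hodd : ∑ k ∈ range K, normSq (fhat2 (B (2 * j + 1) k) ω)
      = normSq (fhat1 (bs (2 * j + 1)) ω.1) := by
    rw [← mul_one (normSq _), ← hus (ω.2 + π), mul_sum]
    exact sum_congr rfl fun k hk => by
      rw [hB.odd j hj k (mem_range.1 hk), normSq_mul, normSq_conj]
  rw [heven, hodd]

theorem sum_conj_mul_shift_eq_zero (hB : IsTensorBank J K bs us B)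
    (hbs : ∀ ω, ∑ j ∈ range (2 * J), conj (fhat1 (bs j) ω) * fhat1 (bs j) (ω + π) = 0)
    (ω : ℝ × ℝ) :
    ∑ j ∈ range (2 * J), ∑ k ∈ range K,
      conj (fhat2 (B j k) ω) * fhat2 (B j k) (ω.1 + π, ω.2 + π) = 0 := by
  set P := ∑ k ∈ range K, conj (fhat1 (us k) ω.2) * fhat1 (us k) (ω.2 + π)
  -- the odd rows produce `u_k(ω₂ + π) conj u_k(ω₂ + 2π)`, the same factor as the even rows
  have hrow (i : ℕ) (hi : i < 2 * J) : ∑ k ∈ range K,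
      conj (fhat2 (B i k) ω) * fhat2 (B i k) (ω.1 + π, ω.2 + π)
        = conj (fhat1 (bs i) ω.1) * fhat1 (bs i) (ω.1 + π) * P := by
    rw [mul_sum]
    refine sum_congr rfl fun k hk => ?_
    obtain ⟨j, rfl | rfl⟩ := Nat.even_or_odd' i
    · rw [hB.even j (by omega) k (mem_range.1 hk), hB.even j (by omega) k (mem_range.1 hk),
        map_mul]
      ring
    · rw [hB.odd j (by omega) k (mem_range.1 hk), hB.odd j (by omega) k (mem_range.1 hk),
        add_assoc, ← two_mul, fhat1_periodic, map_mul, conj_conj]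
      ring
  rw [sum_congr rfl fun i hi => hrow i (mem_range.1 hi), ← sum_mul, hbs, zero_mul]

theorem canonical (hB : IsTensorBank J K bs us B)
    (hbs : ∀ j < J, ∀ ω : ℝ, fhat1 (bs (2 * j + 1)) ω
      = exp (-I * ω) * conj (fhat1 (bs (2 * j)) (ω + π))) :
    ∀ j < J, ∀ k < K, ∀ ω : ℝ × ℝ, fhat2 (B (2 * j + 1) k) ω
      = exp (-I * ω.1) * conj (fhat2 (B (2 * j) k) (ω.1 + π, ω.2 + π)) := by
  intro j hj k hk ω
  rw [hB.odd j hj k hk, hB.even j hj k hk, hbs j hj, map_mul]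
  ring

theorem eq_tensorFilter (hB : IsTensorBank J K bs us B) (hJ : 0 < J) (hK : 0 < K)
    (hB00 : (support (B 0 0)).Finite) (hbs0 : (support (bs 0)).Finite)
    (hus0 : (support (us 0)).Finite) : B 0 0 = tensorFilter (bs 0) (us 0) :=
  eq_of_fhat2_eq hB00 (support_tensorFilter_finite hbs0 hus0) fun ω => by
    rw [fhat2_tensorFilter hbs0 hus0]
    exact hB.even 0 hJ 0 hK ω

end IsTensorBank

theorem SumRules2D_tensorFilter {u v : ℤ → ℂ} {m n : ℕ} (hu : (support u).Finite)
    (hv : (support v).Finite) (hum : SumRules1D u m) (hvn : SumRules1D v n) :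
    SumRules2D (tensorFilter u v) (m + n) := by
  refine ⟨by rw [fhat2_tensorFilter hu hv, hum.1, hvn.1, one_mul], fun μ hμ => ?_⟩
  have moment_finite (w : ℤ → ℂ) (hw : (support w).Finite) (p : ℕ) :
      (support fun k : ℤ => (-1 : ℂ) ^ k * w k * (k : ℂ) ^ p).Finite :=
    hw.subset fun _ hk => right_ne_zero_of_mul (left_ne_zero_of_mul hk)
  calc ∑ᶠ k : ℤ × ℤ,
        (-1 : ℂ) ^ (k.1 + k.2) * tensorFilter u v k * (k.1 : ℂ) ^ μ.1 * (k.2 : ℂ) ^ μ.2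
      = ∑ᶠ k : ℤ × ℤ, ((-1 : ℂ) ^ k.1 * u k.1 * (k.1 : ℂ) ^ μ.1)
          * ((-1 : ℂ) ^ k.2 * v k.2 * (k.2 : ℂ) ^ μ.2) :=
        finsum_congr fun k => by rw [tensorFilter, zpow_add₀ (by norm_num)]; ring
    _ = (∑ᶠ k : ℤ, (-1 : ℂ) ^ k * u k * (k : ℂ) ^ μ.1)
          * ∑ᶠ k : ℤ, (-1 : ℂ) ^ k * v k * (k : ℂ) ^ μ.2 :=
        (finsum_mul_finsum_prod (moment_finite u hu _) (moment_finite v hv _)).symm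
    _ = 0 := by
        rcases lt_or_ge μ.1 m with h | h
        · rw [hum.2 _ h, zero_mul]
        · rw [hvn.2 _ (by omega), mul_zero]

theorem abs_mulVec_of_mem_D4 {E : Matrix (Fin 2) (Fin 2) ℝ} (hE : E ∈ D4) (x y : ℝ) :
    (|E.mulVec ![x, y] 0| = |x| ∧ |E.mulVec ![x, y] 1| = |y|) ∨
      (|E.mulVec ![x, y] 0| = |y| ∧ |E.mulVec ![x, y] 1| = |x|) := by
  simp only [D4, Set.mem_insert_iff, Set.mem_singleton_iff] at hE
  rcases hE with rfl | rfl | rfl | rfl | rfl | rfl | rfl | rfl <;> simp [Matrix.mulVec]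

theorem eq_of_abs_sub_half_eq {a : ℤ → ℂ} {c : ℤ} (hsym : ∀ k, a (c - k) = a k) {p q : ℤ}
    (h : |(p : ℝ) - c / 2| = |(q : ℝ) - c / 2|) : a p = a q := by
  rcases abs_eq_abs.1 h with h | h
  · rw [show p = q by exact_mod_cast (by linarith : (p : ℝ) = q)]
  · rw [show p = c - q by exact_mod_cast (by linarith : (p : ℝ) = c - q), hsym]

theorem D4Symm_tensorFilter_self {a : ℤ → ℂ} {c : ℤ} (hsym : ∀ k, a (c - k) = a k) :
    D4Symm (tensorFilter a a) ((c : ℝ) / 2, (c : ℝ) / 2) := by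
  intro E hE k k' hk
  have h0 := congrFun hk 0
  have h1 := congrFun hk 1
  simp only [Pi.add_apply, Matrix.cons_val_zero, Matrix.cons_val_one] at h0 h1
  have habs := abs_mulVec_of_mem_D4 hE (k.1 - c / 2) (k.2 - c / 2)
  rw [eq_sub_of_add_eq h0.symm, eq_sub_of_add_eq h1.symm] at habs
  rw [tensorFilter, tensorFilter]
  rcases habs with ⟨e0, e1⟩ | ⟨e0, e1⟩
  · rw [eq_of_abs_sub_half_eq hsym e0, eq_of_abs_sub_half_eq hsym e1]
  · rw [eq_of_abs_sub_half_eq hsym e0, eq_of_abs_sub_half_eq hsym e1, mul_comm]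

theorem stmt_19_general (a : ℤ → ℝ)
    (hafin : (Function.support a).Finite)
    (bs us : ℕ → ℤ → ℂ)
    (hbs0 : bs 0 = fun k => (a k : ℂ))
    (hbank1 : ∀ ω : ℝ, Complex.normSq (fhat1 (bs 0) ω) + Complex.normSq (fhat1 (bs 1) ω)
      + Complex.normSq (fhat1 (bs 2) ω) + Complex.normSq (fhat1 (bs 3) ω) = 1)
    (hbank2 : ∀ ω : ℝ, (starRingEnd ℂ) (fhat1 (bs 0) ω) * fhat1 (bs 0) (ω + π)
      + (starRingEnd ℂ) (fhat1 (bs 1) ω) * fhat1 (bs 1) (ω + π)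
      + (starRingEnd ℂ) (fhat1 (bs 2) ω) * fhat1 (bs 2) (ω + π)
      + (starRingEnd ℂ) (fhat1 (bs 3) ω) * fhat1 (bs 3) (ω + π) = 0)
    (hcan1 : ∀ ω : ℝ, fhat1 (bs 1) ω
      = Complex.exp (-(Complex.I) * (ω : ℂ)) * (starRingEnd ℂ) (fhat1 (bs 0) (ω + π)))
    (hcan3 : ∀ ω : ℝ, fhat1 (bs 3) ω
      = Complex.exp (-(Complex.I) * (ω : ℂ)) * (starRingEnd ℂ) (fhat1 (bs 2) (ω + π)))
    (hus0 : us 0 = fun k => (a k : ℂ))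
    (hsos : ∀ ω : ℝ, Complex.normSq (fhat1 (us 0) ω) + Complex.normSq (fhat1 (us 1) ω)
      + Complex.normSq (fhat1 (us 2) ω) = 1)
    (B : ℕ → ℕ → ℤ × ℤ → ℂ)
    (hBfin : ∀ j k, (Function.support (B j k)).Finite)
    (hBeven : ∀ j < 2, ∀ k < 3, ∀ ω : ℝ × ℝ,
      fhat2 (B (2 * j) k) ω = fhat1 (bs (2 * j)) ω.1 * fhat1 (us k) ω.2)
    (hBodd : ∀ j < 2, ∀ k < 3, ∀ ω : ℝ × ℝ,
      fhat2 (B (2 * j + 1) k) ω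
        = fhat1 (bs (2 * j + 1)) ω.1 * (starRingEnd ℂ) (fhat1 (us k) (ω.2 + π))) :
    -- the twelve filters (with B 0 0 as low-pass) form a quincunx tight framelet filter bank
    (∀ ω : ℝ × ℝ, ∑ j ∈ Finset.range 4, ∑ k ∈ Finset.range 3,
        Complex.normSq (fhat2 (B j k) ω) = 1) ∧
    (∀ ω : ℝ × ℝ, ∑ j ∈ Finset.range 4, ∑ k ∈ Finset.range 3,
        (starRingEnd ℂ) (fhat2 (B j k) ω) * fhat2 (B j k) (ω.1 + π, ω.2 + π) = 0) ∧
    -- it is 6-multiple canonical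
    (∀ j < 2, ∀ k < 3, ∀ ω : ℝ × ℝ,
      fhat2 (B (2 * j + 1) k) ω
        = Complex.exp (-(Complex.I) * (ω.1 : ℂ)) *
            (starRingEnd ℂ) (fhat2 (B (2 * j) k) (ω.1 + π, ω.2 + π))) ∧
    -- sum rules of the tensor low-pass filter a^{2D} = B 0 0
    (∀ m : ℕ, SumRules1D (fun k => (a k : ℂ)) m → SumRules2D (B 0 0) (2 * m)) ∧
    -- D₄-symmetry of a^{2D} when a is symmetric about c/2
    (∀ c : ℤ, (∀ k : ℤ, a (c - k) = a k) →
      D4Symm (B 0 0) ((c : ℝ) / 2, (c : ℝ) / 2)) := by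
  have hB : IsTensorBank 2 3 bs us B := ⟨hBeven, hBodd⟩
  have hafin' : (support fun k => (a k : ℂ)).Finite := hafin.subset fun k hk => by simpa using hk
  have hB00 := hB.eq_tensorFilter two_pos three_pos (hBfin 0 0) (hbs0 ▸ hafin') (hus0 ▸ hafin')
  rw [hbs0, hus0] at hB00
  refine ⟨hB.sum_normSq_eq_one (by simpa [sum_range_succ] using hbank1)
      (by simpa [sum_range_succ] using hsos),
    hB.sum_conj_mul_shift_eq_zero (by simpa [sum_range_succ] using hbank2),
    hB.canonical fun j hj => ?_,
    fun m hm => hB00 ▸ two_mul m ▸ SumRules2D_tensorFilter hafin' hafin' hm hm,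
    fun c hc => hB00 ▸ D4Symm_tensorFilter_self fun k => congrArg _ (hc k)⟩
  interval_cases j
  exacts [hcan1, hcan3]

/-- the 6-multiple canonical quincunx tight framelet filter bank obtained from a
real double canonical tight 2-framelet filter bank `{a; b₁, b₂, b₃}` and real filters `u₁, u₂`
with `|â|² + |û₁|² + |û₂|² = 1`, together with sum rules and `D₄`-symmetry of the tensor
low-pass filter. -/
theorem stmt_19 (a b₁ b₂ b₃ : ℤ → ℝ)
    (hafin : (Function.support a).Finite) (hb₁fin : (Function.support b₁).Finite)
    (hb₂fin : (Function.support b₂).Finite) (hb₃fin : (Function.support b₃).Finite)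
    (bs us : ℕ → ℤ → ℂ)
    (hbs0 : bs 0 = fun k => (a k : ℂ)) (hbs1 : bs 1 = fun k => (b₁ k : ℂ))
    (hbs2 : bs 2 = fun k => (b₂ k : ℂ)) (hbs3 : bs 3 = fun k => (b₃ k : ℂ))
    (hbank1 : ∀ ω : ℝ, Complex.normSq (fhat1 (bs 0) ω) + Complex.normSq (fhat1 (bs 1) ω)
      + Complex.normSq (fhat1 (bs 2) ω) + Complex.normSq (fhat1 (bs 3) ω) = 1)
    (hbank2 : ∀ ω : ℝ, (starRingEnd ℂ) (fhat1 (bs 0) ω) * fhat1 (bs 0) (ω + π)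
      + (starRingEnd ℂ) (fhat1 (bs 1) ω) * fhat1 (bs 1) (ω + π)
      + (starRingEnd ℂ) (fhat1 (bs 2) ω) * fhat1 (bs 2) (ω + π)
      + (starRingEnd ℂ) (fhat1 (bs 3) ω) * fhat1 (bs 3) (ω + π) = 0)
    (hcan1 : ∀ ω : ℝ, fhat1 (bs 1) ω
      = Complex.exp (-(Complex.I) * (ω : ℂ)) * (starRingEnd ℂ) (fhat1 (bs 0) (ω + π)))
    (hcan3 : ∀ ω : ℝ, fhat1 (bs 3) ω
      = Complex.exp (-(Complex.I) * (ω : ℂ)) * (starRingEnd ℂ) (fhat1 (bs 2) (ω + π)))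
    (u₁ u₂ : ℤ → ℝ)
    (hu₁fin : (Function.support u₁).Finite) (hu₂fin : (Function.support u₂).Finite)
    (hus0 : us 0 = fun k => (a k : ℂ)) (hus1 : us 1 = fun k => (u₁ k : ℂ))
    (hus2 : us 2 = fun k => (u₂ k : ℂ))
    (hsos : ∀ ω : ℝ, Complex.normSq (fhat1 (us 0) ω) + Complex.normSq (fhat1 (us 1) ω)
      + Complex.normSq (fhat1 (us 2) ω) = 1)
    (B : ℕ → ℕ → ℤ × ℤ → ℂ)
    (hBfin : ∀ j k, (Function.support (B j k)).Finite)
    (hBeven : ∀ j < 2, ∀ k < 3, ∀ ω : ℝ × ℝ,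
      fhat2 (B (2 * j) k) ω = fhat1 (bs (2 * j)) ω.1 * fhat1 (us k) ω.2)
    (hBodd : ∀ j < 2, ∀ k < 3, ∀ ω : ℝ × ℝ,
      fhat2 (B (2 * j + 1) k) ω
        = fhat1 (bs (2 * j + 1)) ω.1 * (starRingEnd ℂ) (fhat1 (us k) (ω.2 + π))) :
    -- the twelve filters (with B 0 0 as low-pass) form a quincunx tight framelet filter bank
    (∀ ω : ℝ × ℝ, ∑ j ∈ Finset.range 4, ∑ k ∈ Finset.range 3,
        Complex.normSq (fhat2 (B j k) ω) = 1) ∧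
    (∀ ω : ℝ × ℝ, ∑ j ∈ Finset.range 4, ∑ k ∈ Finset.range 3,
        (starRingEnd ℂ) (fhat2 (B j k) ω) * fhat2 (B j k) (ω.1 + π, ω.2 + π) = 0) ∧
    -- it is 6-multiple canonical
    (∀ j < 2, ∀ k < 3, ∀ ω : ℝ × ℝ,
      fhat2 (B (2 * j + 1) k) ω
        = Complex.exp (-(Complex.I) * (ω.1 : ℂ)) *
            (starRingEnd ℂ) (fhat2 (B (2 * j) k) (ω.1 + π, ω.2 + π))) ∧
    -- sum rules of the tensor low-pass filter a^{2D} = B 0 0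
    (∀ m : ℕ, SumRules1D (fun k => (a k : ℂ)) m → SumRules2D (B 0 0) (2 * m)) ∧
    -- D₄-symmetry of a^{2D} when a is symmetric about c/2
    (∀ c : ℤ, (∀ k : ℤ, a (c - k) = a k) →
      D4Symm (B 0 0) ((c : ℝ) / 2, (c : ℝ) / 2)) :=
  stmt_19_general a hafin bs us hbs0 hbank1 hbank2 hcan1 hcan3 hus0 hsos B hBfin hBeven hBodd
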